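/- arXiv:1411.0564 — 2 statements merged into one kernel-verified Lean document; each statement's English description precedes it below -/
import Mathlib

section
/- With the setup below, define B_G = (1/(r² n_d)) Σ_{d∈{0,…,r−1}²} Σ_{j=1}^{n_d} ( exp(i q_γ·b_{dj}) − E[exp(i q_γ·b_{dj})] ). If moreover ε ≤ 1/(πr) and q_γ ≠ 0, then for every c > 0, P( |B_G| ≥ √2 ( c‖q_γ‖₁ ε + ‖q_γ‖₁³ ε_r³ / 3 ) ) ≤ 4 exp( − c² n_d / 8 ). -/
open MeasureTheory ProbabilityTheory

/-- The ℓ¹ norm on ℝ². -/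
def srL1 (q : ℝ × ℝ) : ℝ := |q.1| + |q.2|

/-- The Euclidean (ℓ²) norm on ℝ². -/
noncomputable def srL2 (q : ℝ × ℝ) : ℝ := Real.sqrt (q.1 ^ 2 + q.2 ^ 2)

/-- `f(q, εr) = ‖q‖₁² εr²/2 + ‖q‖₁³ εr³/6`. -/
noncomputable def srF (q : ℝ × ℝ) (εr : ℝ) : ℝ :=
  srL1 q ^ 2 * εr ^ 2 / 2 + srL1 q ^ 3 * εr ^ 3 / 6

/-- The centered fluctuation term
`B_G = (1/(r² n_d)) Σ_d Σ_j (exp(i q·b_{dj}) − E[exp(i q·b_{dj})])`. -/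
noncomputable def srBG {Ω : Type*} [MeasureSpace Ω] (r nd : ℕ)
    (b : Fin r × Fin r → Fin nd → Ω → ℝ × ℝ) (q : ℝ × ℝ) (ω : Ω) : ℂ :=
  ((r : ℂ) ^ 2 * (nd : ℂ))⁻¹ * ∑ d : Fin r × Fin r, ∑ j : Fin nd,
    (Complex.exp (Complex.I * ((q.1 * (b d j ω).1 + q.2 * (b d j ω).2 : ℝ) : ℂ))
      - ∫ ω', Complex.exp (Complex.I * ((q.1 * (b d j ω').1 + q.2 * (b d j ω').2 : ℝ) : ℂ)))

/-- The coefficient `G_α(k') = (1/(r² n_d)) Σ_d Σ_j exp(−i θ_{αd}) exp(i q_α·b_{dj})`,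
parametrized by `δ = α − γ` (so that `θ_{αd} = (2π/r) δ·d`) and `q = q_α`. -/
noncomputable def srG {Ω : Type*} (r nd : ℕ)
    (b : Fin r × Fin r → Fin nd → Ω → ℝ × ℝ) (δ : ℤ × ℤ) (q : ℝ × ℝ) (ω : Ω) : ℂ :=
  ((r : ℂ) ^ 2 * (nd : ℂ))⁻¹ * ∑ d : Fin r × Fin r, ∑ j : Fin nd,
    Complex.exp (-Complex.I *
        ((2 * Real.pi / (r : ℝ) *
          ((δ.1 * ((d.1 : ℕ) : ℤ) + δ.2 * ((d.2 : ℕ) : ℤ) : ℤ) : ℝ) : ℝ) : ℂ))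
      * Complex.exp (Complex.I * ((q.1 * (b d j ω).1 + q.2 * (b d j ω).2 : ℝ) : ℂ))

/-! Since `|q·b| ≤ ‖q‖₁ εr`, every phase `exp(i q·b_{dj})` lies within `‖q‖₁ εr` of `1`, so by
Hoeffding's lemma the centred real and imaginary parts of the `r² n_d` independent summands are
sub-Gaussian with parameter `(‖q‖₁ εr)²`. If `|z| ≥ √2 s` then `|Re z| ≥ s` or `|Im z| ≥ s`, so
Hoeffding's inequality applied to `± Re` and `± Im` bounds the probability by four tails, each at
most `exp(-c² n_d / 2)` at the threshold `√2 c ‖q‖₁ ε`. -/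

open scoped NNReal

lemma le_abs_re_or_le_abs_im_of_sqrt_two_mul_le_norm {z : ℂ} {t : ℝ} (h : √2 * t ≤ ‖z‖) :
    t ≤ |z.re| ∨ t ≤ |z.im| := by
  by_contra! hlt
  have ht : 0 < t := (abs_nonneg _).trans_lt hlt.1
  have hsq : 2 * t ^ 2 ≤ z.re ^ 2 + z.im ^ 2 := by
    have := pow_le_pow_left₀ (by positivity) h 2
    rwa [mul_pow, Real.sq_sqrt zero_le_two, Complex.sq_norm, Complex.normSq_apply, ← sq, ← sq]
      at this
  nlinarith [sq_abs z.re, sq_abs z.im, abs_nonneg z.re, abs_nonneg z.im]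

section Hoeffding

variable {Ω ι : Type*} {m : MeasurableSpace Ω} {μ : Measure Ω} [IsProbabilityMeasure μ]

lemma hasSubgaussianMGF_sub_integral_of_abs_sub_le {X : Ω → ℝ} (hX : Measurable X) {x : ℝ}
    {L : ℝ≥0} (hL : ∀ ω, |X ω - x| ≤ L) :
    HasSubgaussianMGF (fun ω ↦ X ω - μ[X]) (L ^ 2) μ := by
  have hIcc : ∀ᵐ ω ∂μ, X ω ∈ Set.Icc (x - L) (x + L) :=
    ae_of_all _ fun ω ↦ by have := abs_le.1 (hL ω); constructor <;> linarith
  convert hasSubgaussianMGF_of_mem_Icc hX.aemeasurable hIcc using 2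
  ext
  simp only [NNReal.coe_div, coe_nnnorm, Real.norm_eq_abs, add_sub_sub_cancel, NNReal.coe_ofNat]
  rw [abs_of_nonneg (by positivity)]
  ring

lemma measureReal_le_abs_sum_sub_integral_le [Fintype ι] {X : ι → Ω → ℝ} (hind : iIndepFun X μ)
    (hX : ∀ i, Measurable (X i)) {x : ι → ℝ} {L : ℝ≥0} (hL : ∀ i ω, |X i ω - x i| ≤ L)
    {t : ℝ} (ht : 0 ≤ t) :
    μ.real {ω | t ≤ |∑ i, (X i ω - μ[X i])|}
      ≤ 2 * Real.exp (-t ^ 2 / (2 * (Fintype.card ι * L ^ 2))) := by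
  have hsubG i : HasSubgaussianMGF (fun ω ↦ X i ω - μ[X i]) (L ^ 2) μ :=
    hasSubgaussianMGF_sub_integral_of_abs_sub_le (hX i) (hL i)
  have hindc : iIndepFun (fun i ω ↦ X i ω - μ[X i]) μ :=
    hind.comp (fun i (y : ℝ) ↦ y - ∫ ω, X i ω ∂μ) fun _ ↦ measurable_sub_const _
  have hparam : ((∑ _i : ι, L ^ 2 : ℝ≥0) : ℝ) = Fintype.card ι * L ^ 2 := by simp
  have hupper := HasSubgaussianMGF.measure_sum_ge_le_of_iIndepFun hindc (s := .univ)
    (fun i _ ↦ hsubG i) ht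
  have hlower := HasSubgaussianMGF.measure_sum_ge_le_of_iIndepFun
    (X := fun i ω ↦ -(X i ω - μ[X i])) (hindc.comp (fun _ (y : ℝ) ↦ -y) fun _ ↦ measurable_neg)
    (s := .univ) (fun i _ ↦ (hsubG i).neg) ht
  rw [hparam] at hupper hlower
  calc μ.real {ω | t ≤ |∑ i, (X i ω - μ[X i])|}
      ≤ μ.real ({ω | t ≤ ∑ i, (X i ω - μ[X i])} ∪ {ω | t ≤ ∑ i, -(X i ω - μ[X i])}) := by
        refine measureReal_mono (fun ω hω ↦ ?_)
        simp only [Set.mem_ofPred_eq, Set.mem_union, Finset.sum_neg_distrib] at hω ⊢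
        exact le_abs.1 hω
    _ ≤ _ := (measureReal_union_le _ _).trans (by linarith)

lemma measureReal_sqrt_two_mul_le_norm_sum_sub_integral_le [Fintype ι] {Z : ι → Ω → ℂ}
    (hind : iIndepFun Z μ) (hZ : ∀ i, Measurable (Z i)) {z : ι → ℂ} {L : ℝ≥0}
    (hL : ∀ i ω, ‖Z i ω - z i‖ ≤ L) {t : ℝ} (ht : 0 ≤ t) :
    μ.real {ω | √2 * t ≤ ‖∑ i, (Z i ω - μ[Z i])‖}
      ≤ 4 * Real.exp (-t ^ 2 / (2 * (Fintype.card ι * L ^ 2))) := by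
  have hint i : Integrable (Z i) μ :=
    .of_bound (hZ i).aestronglyMeasurable (‖z i‖ + L) <| ae_of_all _ fun ω ↦ by
      linarith [norm_le_norm_add_norm_sub' (Z i ω) (z i), hL i ω]
  have hre := measureReal_le_abs_sum_sub_integral_le
    (hind.comp (fun _ ↦ Complex.re) fun _ ↦ Complex.measurable_re)
    (fun i ↦ Complex.measurable_re.comp (hZ i)) (x := fun i ↦ (z i).re)
    (fun i ω ↦ (Complex.abs_re_le_norm (Z i ω - z i)).trans (hL i ω)) ht
  have him := measureReal_le_abs_sum_sub_integral_le
    (hind.comp (fun _ ↦ Complex.im) fun _ ↦ Complex.measurable_im)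
    (fun i ↦ Complex.measurable_im.comp (hZ i)) (x := fun i ↦ (z i).im)
    (fun i ω ↦ (Complex.abs_im_le_norm (Z i ω - z i)).trans (hL i ω)) ht
  have hre_int i : ∫ ω, (Z i ω).re ∂μ = (μ[Z i]).re := integral_re (hint i)
  have him_int i : ∫ ω, (Z i ω).im ∂μ = (μ[Z i]).im := integral_im (hint i)
  simp only [Function.comp_apply, hre_int, him_int] at hre him
  calc μ.real {ω | √2 * t ≤ ‖∑ i, (Z i ω - μ[Z i])‖}
      ≤ μ.real ({ω | t ≤ |∑ i, ((Z i ω).re - (μ[Z i]).re)|}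
          ∪ {ω | t ≤ |∑ i, ((Z i ω).im - (μ[Z i]).im)|}) := by
        refine measureReal_mono fun ω hω ↦ ?_
        simpa [Complex.re_sum, Complex.im_sum] using
          le_abs_re_or_le_abs_im_of_sqrt_two_mul_le_norm hω
    _ ≤ _ := (measureReal_union_le _ _).trans (by linarith)

end Hoeffding

noncomputable def expIDot (q x : ℝ × ℝ) : ℂ :=
  Complex.exp (Complex.I * ((q.1 * x.1 + q.2 * x.2 : ℝ) : ℂ))

lemma continuous_expIDot (q : ℝ × ℝ) : Continuous (expIDot q) := by
  unfold expIDot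
  fun_prop

lemma norm_expIDot_sub_one_le {q x : ℝ × ℝ} {e : ℝ} (hx : |x.1| ≤ e ∧ |x.2| ≤ e) :
    ‖expIDot q x - 1‖ ≤ srL1 q * e := by
  calc ‖expIDot q x - 1‖ ≤ |q.1 * x.1 + q.2 * x.2| := Real.norm_exp_I_mul_ofReal_sub_one_le
    _ ≤ |q.1| * |x.1| + |q.2| * |x.2| := by
        simpa only [abs_mul] using abs_add_le (q.1 * x.1) (q.2 * x.2)
    _ ≤ |q.1| * e + |q.2| * e := by gcongr <;> [exact hx.1; exact hx.2]
    _ = srL1 q * e := by rw [srL1]; ring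

lemma srL1_pos {q : ℝ × ℝ} (hq : q ≠ 0) : 0 < srL1 q := by
  have hq' : q.1 ≠ 0 ∨ q.2 ≠ 0 := by
    contrapose! hq
    exact Prod.ext hq.1 hq.2
  rcases hq' with h | h
  · exact add_pos_of_pos_of_nonneg (abs_pos.2 h) (abs_nonneg _)
  · exact add_pos_of_nonneg_of_pos (abs_nonneg _) (abs_pos.2 h)

lemma norm_srBG {Ω : Type*} [MeasureSpace Ω] (r nd : ℕ)
    (b : Fin r × Fin r → Fin nd → Ω → ℝ × ℝ) (q : ℝ × ℝ) (ω : Ω) :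
    ‖srBG r nd b q ω‖ = ‖∑ p : (Fin r × Fin r) × Fin nd,
      (expIDot q (b p.1 p.2 ω) - ∫ ω', expIDot q (b p.1 p.2 ω'))‖ / (r ^ 2 * nd) := by
  rw [Fintype.sum_prod_type, srBG, norm_mul, norm_inv, inv_mul_eq_div]
  norm_cast

theorem stmt_6_general
    {Ω : Type*} [MeasureSpace Ω] [IsProbabilityMeasure (ℙ : Measure Ω)]
    (r nd : ℕ) (hr : 2 ≤ r) (hnd : 1 ≤ nd)
    (ε εr : ℝ) (hε : 0 < ε) (hεr : εr = ε * r)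
    (b : Fin r × Fin r → Fin nd → Ω → ℝ × ℝ)
    (hbmeas : ∀ d j, Measurable (b d j))
    (hbdd : ∀ d j ω, |(b d j ω).1| ≤ εr ∧ |(b d j ω).2| ≤ εr)
    (hindep : iIndepFun
      (fun p : (Fin r × Fin r) × Fin nd => b p.1 p.2) ℙ)
    (qγ : ℝ × ℝ)
    (hq0 : qγ ≠ 0) (c : ℝ) (hc : 0 < c) :
    (ℙ {ω | Real.sqrt 2 * (c * srL1 qγ * ε + srL1 qγ ^ 3 * εr ^ 3 / 3)
        ≤ ‖srBG r nd b qγ ω‖}).toReal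
      ≤ 4 * Real.exp (-(c ^ 2 * nd) / 8) := by
  subst hεr
  have ha := srL1_pos hq0
  have hr0 : (0 : ℝ) < r := by exact_mod_cast (by omega : 0 < r)
  have hnd0 : (0 : ℝ) < nd := by exact_mod_cast hnd
  set n : ℝ := r ^ 2 * nd with hn
  set u := c * srL1 qγ * ε + srL1 qγ ^ 3 * (ε * r) ^ 3 / 3
  have hu : c * srL1 qγ * ε ≤ u := le_add_of_nonneg_right (by positivity)
  have hcard : (Fintype.card ((Fin r × Fin r) × Fin nd) : ℝ) = n := by
    simp only [Fintype.card_prod, Fintype.card_fin]; push_cast; ring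
  have hexpIDot := (continuous_expIDot qγ).measurable
  have hoeffding := measureReal_sqrt_two_mul_le_norm_sum_sub_integral_le
    (hindep.comp (fun _ ↦ expIDot qγ) fun _ ↦ hexpIDot)
    (fun p ↦ hexpIDot.comp (hbmeas p.1 p.2)) (z := fun _ ↦ 1)
    (L := ⟨srL1 qγ * (ε * r), by positivity⟩)
    (fun p ω ↦ norm_expIDot_sub_one_le (hbdd p.1 p.2 ω)) (t := n * u) (by positivity)
  rw [hcard] at hoeffding
  have hevent : {ω | √2 * u ≤ ‖srBG r nd b qγ ω‖} = {ω | √2 * (n * u) ≤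
      ‖∑ p : (Fin r × Fin r) × Fin nd,
        (expIDot qγ (b p.1 p.2 ω) - ∫ ω', expIDot qγ (b p.1 p.2 ω'))‖} := by
    ext ω
    rw [Set.mem_ofPred_eq, Set.mem_ofPred_eq, norm_srBG, le_div_iff₀ (by positivity), ← hn,
      mul_assoc, mul_comm u]
  have hexponent : c ^ 2 * nd / 8 ≤ (n * u) ^ 2 / (2 * (n * (srL1 qγ * (ε * r)) ^ 2)) := by
    rw [le_div_iff₀ (by positivity)]
    calc c ^ 2 * nd / 8 * (2 * (n * (srL1 qγ * (ε * r)) ^ 2))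
        = (n * (c * srL1 qγ * ε)) ^ 2 / 4 := by rw [hn]; ring
      _ ≤ (n * u) ^ 2 := by
          have : (n * (c * srL1 qγ * ε)) ^ 2 ≤ (n * u) ^ 2 := by gcongr
          linarith [sq_nonneg (n * (c * srL1 qγ * ε))]
  calc (ℙ {ω | √2 * u ≤ ‖srBG r nd b qγ ω‖}).toReal
      ≤ 4 * Real.exp (-(n * u) ^ 2 / (2 * (n * (srL1 qγ * (ε * r)) ^ 2))) := by
        rw [hevent]; exact hoeffding
    _ ≤ 4 * Real.exp (-(c ^ 2 * nd) / 8) := by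
        gcongr 4 * Real.exp ?_
        rw [neg_div, neg_div]
        exact neg_le_neg hexponent

/-- Concentration inequality (28) for the modulus of `B_G`. -/
theorem stmt_6
    {Ω : Type*} [MeasureSpace Ω] [IsProbabilityMeasure (ℙ : Measure Ω)]
    (r N nd : ℕ) (hr : 2 ≤ r) (hN : 1 ≤ N) (hnd : 1 ≤ nd)
    (ε εr : ℝ) (hε : 0 < ε) (hεr : εr = ε * r)
    (b : Fin r × Fin r → Fin nd → Ω → ℝ × ℝ)
    (hbmeas : ∀ d j, Measurable (b d j))
    (hbdd : ∀ d j ω, |(b d j ω).1| ≤ εr ∧ |(b d j ω).2| ≤ εr)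
    (hindep : iIndepFun
      (fun p : (Fin r × Fin r) × Fin nd => b p.1 p.2) ℙ)
    (k' k γ : ℤ × ℤ)
    (hk'γ : k' = (k.1 + γ.1 * N, k.2 + γ.2 * N))
    (hk'HR : -(r * N : ℤ) ≤ 2 * k'.1 ∧ 2 * k'.1 < r * N ∧
             -(r * N : ℤ) ≤ 2 * k'.2 ∧ 2 * k'.2 < r * N)
    (hkLR : -(N : ℤ) ≤ 2 * k.1 ∧ 2 * k.1 < N ∧ -(N : ℤ) ≤ 2 * k.2 ∧ 2 * k.2 < N)
    (qγ : ℝ × ℝ)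
    (hqγ : qγ = (2 * Real.pi * (k'.1 : ℝ) / ((r : ℝ) * N),
                 2 * Real.pi * (k'.2 : ℝ) / ((r : ℝ) * N)))
    (hεπ : ε ≤ 1 / (Real.pi * r)) (hq0 : qγ ≠ 0) (c : ℝ) (hc : 0 < c) :
    (ℙ {ω | Real.sqrt 2 * (c * srL1 qγ * ε + srL1 qγ ^ 3 * εr ^ 3 / 3)
        ≤ ‖srBG r nd b qγ ω‖}).toReal
      ≤ 4 * Real.exp (-(c ^ 2 * nd) / 8) :=
  stmt_6_general r nd hr hnd ε εr hε hεr b hbmeas hbdd hindep qγ hq0 c hc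
end

section
/- With the setup below, assume the b_{dj} are independent and identically distributed, with common characteristic value χ(q) = E[exp(i q·b_{dj})] for q ∈ ℝ². Let α₁, α₂ ∈ ℤ² with k + α₁N ∈ D_HR, k + α₂N ∈ D_HR, α₁ ≠ γ and α₂ ≠ γ. Then E[ G_{α₁}(k') · conj(G_{α₂}(k')) ] = (1/(r² n_d)) ( 1 − |χ(q_{α₁})|² ) if α₁ = α₂, and E[ G_{α₁}(k') · conj(G_{α₂}(k')) ] = 0 if α₁ ≠ α₂; in particular, the aliasing coefficients (G_α(k'))_{α≠γ} are pairwise uncorrelated. -/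
/-! Expanding `G_{α₁} · conj G_{α₂}` as a double sum over the samples `p = (d, j)`, independence
gives `E[exp(i q₁·b_p) conj exp(i q₂·b_{p'})] = χ(q₁) conj χ(q₂)` for `p ≠ p'` and `χ(q₁ - q₂)` for
`p = p'`. The part common to all pairs then carries the factor `Σ_d exp(-i θ_{α₁ d})`, a full sum of
powers of `r`-th roots of unity; it vanishes because `α₁ - γ ∉ rℤ²`, as two aliases `k + αN` in
`D_HR` differ by less than `rN` in each coordinate. The diagonal correction carries
`Σ_d exp(-i (θ_{α₁ d} - θ_{α₂ d}))`, which vanishes in the same way when `α₁ ≠ α₂`, and is `r² n_d`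
when `α₁ = α₂`, where `χ(0) = 1`. -/

open MeasureTheory ProbabilityTheory

open ComplexConjugate Finset

theorem IsPrimitiveRoot.geom_sum_zpow_eq_zero {K : Type*} [Field K] {ζ : K} {r : ℕ}
    (hζ : IsPrimitiveRoot ζ r) {m : ℤ} (hm : ¬ (r : ℤ) ∣ m) :
    ∑ t ∈ range r, (ζ ^ m) ^ t = 0 := by
  have hne : ζ ^ m ≠ 1 := fun h => hm ((hζ.zpow_eq_one_iff_dvd m).mp h)
  have hpow : (ζ ^ m) ^ r = 1 := by
    rw [← zpow_natCast, ← zpow_mul, mul_comm, zpow_mul, zpow_natCast, hζ.pow_eq_one, one_zpow]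
  rw [geom_sum_eq hne, hpow, sub_self, zero_div]

theorem Finset.sum_sum_mul_ite_eq {ι R : Type*} [Fintype ι] [DecidableEq ι] [CommRing R]
    (a b : ι → R) (u v : R) :
    ∑ i, ∑ j, a i * b j * (if i = j then u else v)
      = (∑ i, a i) * (∑ j, b j) * v + (∑ i, a i * b i) * (u - v) := by
  have hsplit : ∀ i j, a i * b j * (if i = j then u else v)
      = a i * b j * v + if i = j then a i * b j * (u - v) else 0 := by
    intro i j
    split_ifs <;> ring
  simp only [hsplit, sum_add_distrib, sum_ite_eq, mem_univ, if_true]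
  rw [sum_mul_sum, sum_mul, sum_mul]
  simp only [sum_mul]

theorem integral_sum_mul_conj_sum {Ω ι : Type*} [MeasurableSpace Ω] {μ : Measure Ω}
    [Fintype ι] [DecidableEq ι] (a a' : ι → ℂ) {X Y : ι → Ω → ℂ}
    (hint : ∀ i j, Integrable (fun ω => X i ω * conj (Y j ω)) μ) {u v : ℂ}
    (hmom : ∀ i j, ∫ ω, X i ω * conj (Y j ω) ∂μ = if i = j then u else v) :
    ∫ ω, (∑ i, a i * X i ω) * conj (∑ j, a' j * Y j ω) ∂μ
      = (∑ i, a i) * (∑ j, conj (a' j)) * v + (∑ i, a i * conj (a' i)) * (u - v) := by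
  have hexpand : ∀ ω, (∑ i, a i * X i ω) * conj (∑ j, a' j * Y j ω)
      = ∑ i, ∑ j, a i * conj (a' j) * (X i ω * conj (Y j ω)) := by
    intro ω
    simp only [map_sum, map_mul, sum_mul_sum]
    exact sum_congr rfl fun i _ => sum_congr rfl fun j _ => by ring
  calc ∫ ω, (∑ i, a i * X i ω) * conj (∑ j, a' j * Y j ω) ∂μ
      = ∑ i, ∑ j, a i * conj (a' j) * ∫ ω, X i ω * conj (Y j ω) ∂μ := by
        simp only [hexpand]
        rw [integral_finsetSum _ fun i _ => integrable_finsetSum _ fun j _ => (hint i j).const_mul _]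
        refine sum_congr rfl fun i _ => ?_
        rw [integral_finsetSum _ fun j _ => (hint i j).const_mul _]
        simp only [integral_const_mul]
    _ = _ := by simp only [hmom, sum_sum_mul_ite_eq]

noncomputable def planeWave (q x : ℝ × ℝ) : ℂ :=
  Complex.exp (Complex.I * ((q.1 * x.1 + q.2 * x.2 : ℝ) : ℂ))

@[fun_prop]
theorem continuous_planeWave (q : ℝ × ℝ) : Continuous (planeWave q) := by
  unfold planeWave
  fun_prop

theorem norm_planeWave (q x : ℝ × ℝ) : ‖planeWave q x‖ = 1 := by
  simp [planeWave, Complex.norm_exp]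

theorem planeWave_mul_conj (q q' x : ℝ × ℝ) :
    planeWave q x * conj (planeWave q' x) = planeWave (q - q') x := by
  simp only [planeWave, ← Complex.exp_conj, ← Complex.exp_add, map_mul, Complex.conj_I,
    Complex.conj_ofReal, Prod.fst_sub, Prod.snd_sub]
  push_cast
  ring_nf

section SecondMoments

variable {Ω ι : Type*} [MeasurableSpace Ω] {μ : Measure Ω} {b : ι → Ω → ℝ × ℝ}

theorem integrable_planeWave_mul_conj [IsFiniteMeasure μ] (hb : ∀ i, Measurable (b i))
    (q q' : ℝ × ℝ) (i j : ι) :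
    Integrable (fun ω => planeWave q (b i ω) * conj (planeWave q' (b j ω))) μ := by
  refine Integrable.of_bound (C := 1) ?_ (Filter.Eventually.of_forall fun ω => ?_)
  · exact (((continuous_planeWave q).measurable.comp (hb i)).mul
      ((Complex.continuous_conj.comp (continuous_planeWave q')).measurable.comp
        (hb j))).aestronglyMeasurable
  · simp [norm_planeWave]

theorem integral_planeWave_mul_conj [DecidableEq ι] (hb : ∀ i, Measurable (b i))
    (hindep : iIndepFun b μ) {χ : ℝ × ℝ → ℂ}
    (hχ : ∀ q i, χ q = ∫ ω, planeWave q (b i ω) ∂μ) (q q' : ℝ × ℝ) (i j : ι) :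
    ∫ ω, planeWave q (b i ω) * conj (planeWave q' (b j ω)) ∂μ
      = if i = j then χ (q - q') else χ q * conj (χ q') := by
  split_ifs with hij
  · subst hij
    simp only [planeWave_mul_conj, hχ (q - q') i]
  · rw [(hindep.indepFun hij).integral_fun_comp_mul_comp (g := fun x => conj (planeWave q' x))
      (hb i).aemeasurable (hb j).aemeasurable (continuous_planeWave q).aestronglyMeasurable
      (Complex.continuous_conj.comp (continuous_planeWave q')).aestronglyMeasurable,
      integral_conj, hχ q i, hχ q' j]

end SecondMoments

noncomputable def aliasingPhase (r : ℕ) (δ : ℤ × ℤ) (d : Fin r × Fin r) : ℂ :=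
  Complex.exp (-Complex.I *
    ((2 * Real.pi / (r : ℝ) * ((δ.1 * ((d.1 : ℕ) : ℤ) + δ.2 * ((d.2 : ℕ) : ℤ) : ℤ) : ℝ) : ℝ) : ℂ))

theorem aliasingPhase_eq_zpow (r : ℕ) (δ : ℤ × ℤ) (d : Fin r × Fin r) :
    aliasingPhase r δ d
      = (Complex.exp (2 * Real.pi * Complex.I / r) ^ (-δ.1)) ^ (d.1 : ℕ)
        * (Complex.exp (2 * Real.pi * Complex.I / r) ^ (-δ.2)) ^ (d.2 : ℕ) := by
  rw [← zpow_natCast, ← zpow_natCast, ← zpow_mul, ← zpow_mul, ← Complex.exp_int_mul,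
    ← Complex.exp_int_mul, ← Complex.exp_add, aliasingPhase]
  congr 1
  push_cast
  ring

theorem aliasingPhase_zero (r : ℕ) (d : Fin r × Fin r) : aliasingPhase r 0 d = 1 := by
  simp [aliasingPhase]

theorem aliasingPhase_mul_conj (r : ℕ) (δ δ' : ℤ × ℤ) (d : Fin r × Fin r) :
    aliasingPhase r δ d * conj (aliasingPhase r δ' d) = aliasingPhase r (δ - δ') d := by
  simp only [aliasingPhase, ← Complex.exp_conj, ← Complex.exp_add, map_mul, map_neg,
    Complex.conj_I, Complex.conj_ofReal, Prod.fst_sub, Prod.snd_sub]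
  push_cast
  ring_nf

theorem sum_aliasingPhase_eq_zero {r : ℕ} {δ : ℤ × ℤ} (hδ : ¬ ((r : ℤ) ∣ δ.1 ∧ (r : ℤ) ∣ δ.2)) :
    ∑ d, aliasingPhase r δ d = 0 := by
  rcases Nat.eq_zero_or_pos r with rfl | hr
  · simp
  have hζ := Complex.isPrimitiveRoot_exp r hr.ne'
  set ζ := Complex.exp (2 * Real.pi * Complex.I / r)
  simp only [aliasingPhase_eq_zpow, Fintype.sum_prod_type, ← mul_sum, ← sum_mul]
  rw [Fin.sum_univ_eq_sum_range (fun t => (ζ ^ (-δ.1)) ^ t),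
    Fin.sum_univ_eq_sum_range (fun t => (ζ ^ (-δ.2)) ^ t)]
  rcases not_and_or.mp hδ with h | h
  · rw [hζ.geom_sum_zpow_eq_zero (by rwa [Int.dvd_neg]), zero_mul]
  · rw [hζ.geom_sum_zpow_eq_zero (m := -δ.2) (by rwa [Int.dvd_neg]), mul_zero]

theorem sum_aliasingPhase_fst (r nd : ℕ) (δ : ℤ × ℤ) :
    ∑ p : (Fin r × Fin r) × Fin nd, aliasingPhase r δ p.1 = nd * ∑ d, aliasingPhase r δ d := by
  simp [Fintype.sum_prod_type, mul_sum]

/-- `x ∈ D_HR = {-rN/2, …, rN/2 - 1}²`, with the bounds doubled so that no division occurs. -/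
def MemHighResGrid (r N : ℕ) (x : ℤ × ℤ) : Prop :=
  -(r * N : ℤ) ≤ 2 * x.1 ∧ 2 * x.1 < r * N ∧ -(r * N : ℤ) ≤ 2 * x.2 ∧ 2 * x.2 < r * N

theorem Int.eq_of_dvd_sub_of_two_mul_add_mul_mem_Ico {r N k a a' : ℤ} (hN : 0 < N)
    (ha : 2 * (k + a * N) ∈ Set.Ico (-(r * N)) (r * N))
    (ha' : 2 * (k + a' * N) ∈ Set.Ico (-(r * N)) (r * N)) (h : r ∣ a - a') : a = a' := by
  have hlt : |a - a'| < r := by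
    rw [abs_lt]
    constructor <;> refine lt_of_mul_lt_mul_right ?_ hN.le <;> linarith [ha.1, ha.2, ha'.1, ha'.2]
  exact sub_eq_zero.mp (Int.eq_zero_of_abs_lt_dvd h hlt)

theorem eq_of_memHighResGrid_of_dvd_sub {r N : ℕ} (hN : 0 < N) {k α α' : ℤ × ℤ}
    (hα : MemHighResGrid r N (k.1 + α.1 * N, k.2 + α.2 * N))
    (hα' : MemHighResGrid r N (k.1 + α'.1 * N, k.2 + α'.2 * N))
    (h : (r : ℤ) ∣ (α - α').1 ∧ (r : ℤ) ∣ (α - α').2) : α = α' :=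
  Prod.ext (Int.eq_of_dvd_sub_of_two_mul_add_mul_mem_Ico (by exact_mod_cast hN) ⟨hα.1, hα.2.1⟩
      ⟨hα'.1, hα'.2.1⟩ h.1)
    (Int.eq_of_dvd_sub_of_two_mul_add_mul_mem_Ico (by exact_mod_cast hN) ⟨hα.2.2.1, hα.2.2.2⟩
      ⟨hα'.2.2.1, hα'.2.2.2⟩ h.2)

theorem sum_aliasingPhase_sub_eq_zero {r N : ℕ} (nd : ℕ) (hN : 0 < N) {k α α' : ℤ × ℤ}
    (hα : MemHighResGrid r N (k.1 + α.1 * N, k.2 + α.2 * N))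
    (hα' : MemHighResGrid r N (k.1 + α'.1 * N, k.2 + α'.2 * N)) (hne : α ≠ α') :
    ∑ p : (Fin r × Fin r) × Fin nd, aliasingPhase r (α - α') p.1 = 0 := by
  rw [sum_aliasingPhase_fst, sum_aliasingPhase_eq_zero
    (mt (eq_of_memHighResGrid_of_dvd_sub hN hα hα') hne), mul_zero]

theorem srG_eq_sum {Ω : Type*} (r nd : ℕ) (b : Fin r × Fin r → Fin nd → Ω → ℝ × ℝ)
    (δ : ℤ × ℤ) (q : ℝ × ℝ) (ω : Ω) :
    srG r nd b δ q ω = ((r : ℂ) ^ 2 * nd)⁻¹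
      * ∑ p : (Fin r × Fin r) × Fin nd, aliasingPhase r δ p.1 * planeWave q (b p.1 p.2 ω) := by
  rw [srG]
  exact congrArg _ (Fintype.sum_prod_type fun p : (Fin r × Fin r) × Fin nd =>
    aliasingPhase r δ p.1 * planeWave q (b p.1 p.2 ω)).symm

theorem integral_srG_mul_conj {Ω : Type*} [MeasurableSpace Ω] {μ : Measure Ω}
    [IsFiniteMeasure μ] {r nd : ℕ} {b : Fin r × Fin r → Fin nd → Ω → ℝ × ℝ}
    (hb : ∀ d j, Measurable (b d j))
    (hindep : iIndepFun (fun p : (Fin r × Fin r) × Fin nd => b p.1 p.2) μ) {χ : ℝ × ℝ → ℂ}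
    (hχ : ∀ q d j, χ q = ∫ ω, planeWave q (b d j ω) ∂μ) (δ δ' : ℤ × ℤ) (q q' : ℝ × ℝ) :
    ∫ ω, srG r nd b δ q ω * conj (srG r nd b δ' q' ω) ∂μ
      = ((r : ℂ) ^ 2 * nd)⁻¹ ^ 2
        * ((∑ p : (Fin r × Fin r) × Fin nd, aliasingPhase r δ p.1)
            * (∑ p : (Fin r × Fin r) × Fin nd, conj (aliasingPhase r δ' p.1)) * (χ q * conj (χ q'))
          + (∑ p : (Fin r × Fin r) × Fin nd, aliasingPhase r (δ - δ') p.1)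
            * (χ (q - q') - χ q * conj (χ q'))) := by
  classical
  have hc : conj ((r : ℂ) ^ 2 * nd)⁻¹ = ((r : ℂ) ^ 2 * nd)⁻¹ := by simp
  calc ∫ ω, srG r nd b δ q ω * conj (srG r nd b δ' q' ω) ∂μ
      = ((r : ℂ) ^ 2 * nd)⁻¹ ^ 2 * ∫ ω,
          (∑ p : (Fin r × Fin r) × Fin nd, aliasingPhase r δ p.1 * planeWave q (b p.1 p.2 ω))
          * conj (∑ p : (Fin r × Fin r) × Fin nd,
              aliasingPhase r δ' p.1 * planeWave q' (b p.1 p.2 ω)) ∂μ := by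
        rw [← integral_const_mul]
        congr 1 with ω
        rw [srG_eq_sum, srG_eq_sum, map_mul, hc]
        ring
    _ = _ := by
        have hmom := integral_planeWave_mul_conj (μ := μ)
          (b := fun p : (Fin r × Fin r) × Fin nd => b p.1 p.2) (fun p => hb p.1 p.2) hindep
          (fun q p => hχ q p.1 p.2) q q'
        have hint := integrable_planeWave_mul_conj (μ := μ)
          (b := fun p : (Fin r × Fin r) × Fin nd => b p.1 p.2) (fun p => hb p.1 p.2) q q'
        rw [integral_sum_mul_conj_sum (fun p => aliasingPhase r δ p.1)
          (fun p => aliasingPhase r δ' p.1) hint hmom]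
        simp only [aliasingPhase_mul_conj]

theorem stmt_18_general
    {Ω : Type*} [MeasureSpace Ω] [IsProbabilityMeasure (ℙ : Measure Ω)]
    (r N nd : ℕ) (hr : 2 ≤ r) (hN : 1 ≤ N) (hnd : 1 ≤ nd)
    (b : Fin r × Fin r → Fin nd → Ω → ℝ × ℝ)
    (hbmeas : ∀ d j, Measurable (b d j))
    (hindep : iIndepFun
      (fun p : (Fin r × Fin r) × Fin nd => b p.1 p.2) ℙ)
    (k' k γ : ℤ × ℤ)
    (hk'γ : k' = (k.1 + γ.1 * N, k.2 + γ.2 * N))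
    (hk'HR : -(r * N : ℤ) ≤ 2 * k'.1 ∧ 2 * k'.1 < r * N ∧
             -(r * N : ℤ) ≤ 2 * k'.2 ∧ 2 * k'.2 < r * N)
    (qf : ℤ × ℤ → ℝ × ℝ)
    (χ : ℝ × ℝ → ℂ)
    (hχ : ∀ (q : ℝ × ℝ) (d : Fin r × Fin r) (j : Fin nd),
      χ q = ∫ ω, Complex.exp (Complex.I * ((q.1 * (b d j ω).1 + q.2 * (b d j ω).2 : ℝ) : ℂ)))
    (α₁ α₂ : ℤ × ℤ)
    (hα₁HR : -(r * N : ℤ) ≤ 2 * (k.1 + α₁.1 * N) ∧ 2 * (k.1 + α₁.1 * N) < r * N ∧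
             -(r * N : ℤ) ≤ 2 * (k.2 + α₁.2 * N) ∧ 2 * (k.2 + α₁.2 * N) < r * N)
    (hα₂HR : -(r * N : ℤ) ≤ 2 * (k.1 + α₂.1 * N) ∧ 2 * (k.1 + α₂.1 * N) < r * N ∧
             -(r * N : ℤ) ≤ 2 * (k.2 + α₂.2 * N) ∧ 2 * (k.2 + α₂.2 * N) < r * N)
    (hα₁γ : α₁ ≠ γ) :
    (∫ ω, srG r nd b (α₁ - γ) (qf α₁) ω * (starRingEnd ℂ) (srG r nd b (α₂ - γ) (qf α₂) ω))
      = if α₁ = α₂ then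
          ((r : ℂ) ^ 2 * (nd : ℂ))⁻¹ * (1 - ((‖χ (qf α₁)‖ : ℝ) : ℂ) ^ 2)
        else 0 := by
  have hγ : MemHighResGrid r N (k.1 + γ.1 * N, k.2 + γ.2 * N) := hk'γ ▸ hk'HR
  rw [integral_srG_mul_conj hbmeas hindep hχ, sum_aliasingPhase_sub_eq_zero nd hN hα₁HR hγ hα₁γ,
    zero_mul, zero_mul, zero_add, sub_sub_sub_cancel_right]
  split_ifs with hα
  · subst hα
    have hχ0 : χ 0 = 1 := by
      simp [hχ 0 ⟨⟨0, by omega⟩, ⟨0, by omega⟩⟩ ⟨0, by omega⟩]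
    have hr0 : (r : ℂ) ≠ 0 := by exact_mod_cast (by omega : r ≠ 0)
    have hnd0 : (nd : ℂ) ≠ 0 := by exact_mod_cast (by omega : nd ≠ 0)
    simp only [sub_self, aliasingPhase_zero, sum_const, card_univ, Fintype.card_prod,
      Fintype.card_fin, nsmul_eq_mul, Nat.cast_mul, mul_one, hχ0, Complex.mul_conj']
    field_simp
  · rw [sum_aliasingPhase_sub_eq_zero nd hN hα₁HR hα₂HR hα, zero_mul, mul_zero]

/-- Correlations of the aliasing coefficients (equation (89)): for `α₁, α₂ ≠ γ`,
`E[G_{α₁}(k') conj(G_{α₂}(k'))] = (1/(r² n_d)) (1 − |χ(q_{α₁})|²)` if `α₁ = α₂` and `0`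
otherwise; in particular the aliasing coefficients are pairwise uncorrelated. -/
theorem stmt_18
    {Ω : Type*} [MeasureSpace Ω] [IsProbabilityMeasure (ℙ : Measure Ω)]
    (r N nd : ℕ) (hr : 2 ≤ r) (hN : 1 ≤ N) (hnd : 1 ≤ nd)
    (ε εr : ℝ) (hε : 0 < ε) (hεr : εr = ε * r)
    (b : Fin r × Fin r → Fin nd → Ω → ℝ × ℝ)
    (hbmeas : ∀ d j, Measurable (b d j))
    (hbdd : ∀ d j ω, |(b d j ω).1| ≤ εr ∧ |(b d j ω).2| ≤ εr)
    (hindep : iIndepFun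
      (fun p : (Fin r × Fin r) × Fin nd => b p.1 p.2) ℙ)
    (hiid : ∀ d j d' j', IdentDistrib (b d j) (b d' j') ℙ ℙ)
    (k' k γ : ℤ × ℤ)
    (hk'γ : k' = (k.1 + γ.1 * N, k.2 + γ.2 * N))
    (hk'HR : -(r * N : ℤ) ≤ 2 * k'.1 ∧ 2 * k'.1 < r * N ∧
             -(r * N : ℤ) ≤ 2 * k'.2 ∧ 2 * k'.2 < r * N)
    (hkLR : -(N : ℤ) ≤ 2 * k.1 ∧ 2 * k.1 < N ∧ -(N : ℤ) ≤ 2 * k.2 ∧ 2 * k.2 < N)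
    (qf : ℤ × ℤ → ℝ × ℝ)
    (hqf : ∀ α : ℤ × ℤ, qf α = (2 * Real.pi * ((k.1 + α.1 * N : ℤ) : ℝ) / ((r : ℝ) * N),
                                2 * Real.pi * ((k.2 + α.2 * N : ℤ) : ℝ) / ((r : ℝ) * N)))
    (χ : ℝ × ℝ → ℂ)
    (hχ : ∀ (q : ℝ × ℝ) (d : Fin r × Fin r) (j : Fin nd),
      χ q = ∫ ω, Complex.exp (Complex.I * ((q.1 * (b d j ω).1 + q.2 * (b d j ω).2 : ℝ) : ℂ)))
    (α₁ α₂ : ℤ × ℤ)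
    (hα₁HR : -(r * N : ℤ) ≤ 2 * (k.1 + α₁.1 * N) ∧ 2 * (k.1 + α₁.1 * N) < r * N ∧
             -(r * N : ℤ) ≤ 2 * (k.2 + α₁.2 * N) ∧ 2 * (k.2 + α₁.2 * N) < r * N)
    (hα₂HR : -(r * N : ℤ) ≤ 2 * (k.1 + α₂.1 * N) ∧ 2 * (k.1 + α₂.1 * N) < r * N ∧
             -(r * N : ℤ) ≤ 2 * (k.2 + α₂.2 * N) ∧ 2 * (k.2 + α₂.2 * N) < r * N)
    (hα₁γ : α₁ ≠ γ) (hα₂γ : α₂ ≠ γ) :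
    (∫ ω, srG r nd b (α₁ - γ) (qf α₁) ω * (starRingEnd ℂ) (srG r nd b (α₂ - γ) (qf α₂) ω))
      = if α₁ = α₂ then
          ((r : ℂ) ^ 2 * (nd : ℂ))⁻¹ * (1 - ((‖χ (qf α₁)‖ : ℝ) : ℂ) ^ 2)
        else 0 :=
  stmt_18_general r N nd hr hN hnd b hbmeas hindep k' k γ hk'γ hk'HR qf χ hχ α₁ α₂ hα₁HR hα₂HR hα₁γ
end
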